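/- For every real t with 0 < t < 2, with S_{1,s}(t) := S̃_s(t) − S_s(t): (i) 1·t + 2S₁(t) + S_{1,1}(t) = 0; (ii) 2·t + 2S₂(t) + S_{1,2}(t) = 0; (iii) 3·R₃(t) + 2S₃(t) + S_{1,3}(t) = 0, where R₃(t) := t(6−t)/(3(2−t)). (These are the three instances s = 1, 2, 3 of the constraint s·R_s + 2S_s + S_{1,s} = 0, with R₁ = R₂ = t and the corrected R₃.) -/

import Mathlib

/-! Göttsche–Kool universal functions of a real variable `t`, with all square
roots the nonnegative real square roots.  The `t`-suffixed versions
(`gkYt`, `gkZt`, `gkSt`) are the sign-flipped functions obtained by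
replacing `√t` with `−√t`. -/

noncomputable def gkY1 (t : ℝ) : ℝ := (1 + t) + Real.sqrt t * Real.sqrt (1 + 3*t/4)
noncomputable def gkYt1 (t : ℝ) : ℝ := (1 + t) - Real.sqrt t * Real.sqrt (1 + 3*t/4)
noncomputable def gkY2 (t : ℝ) : ℝ := Real.sqrt t + Real.sqrt (1 + t)
noncomputable def gkYt2 (t : ℝ) : ℝ := -Real.sqrt t + Real.sqrt (1 + t)
noncomputable def gkY3 (t : ℝ) : ℝ := 1 + Real.sqrt t * Real.sqrt (1 - t/4)
noncomputable def gkYt3 (t : ℝ) : ℝ := 1 - Real.sqrt t * Real.sqrt (1 - t/4)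
noncomputable def gkZ1 (t : ℝ) : ℝ :=
  (1 + 3*t/4 - (1/2) * Real.sqrt t * Real.sqrt (1 + 3*t/4)) / (1 + t/2)
noncomputable def gkZt1 (t : ℝ) : ℝ :=
  (1 + 3*t/4 + (1/2) * Real.sqrt t * Real.sqrt (1 + 3*t/4)) / (1 + t/2)
noncomputable def gkZ2 (t : ℝ) : ℝ := 1 + t - Real.sqrt t * Real.sqrt (1 + t)
noncomputable def gkZt2 (t : ℝ) : ℝ := 1 + t + Real.sqrt t * Real.sqrt (1 + t)
noncomputable def gkZ3 (t : ℝ) : ℝ :=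
  (1 + t/2) * ((1 - t/4)*(1 + t/2)
    - (3/2) * Real.sqrt t * Real.sqrt (1 - t/4) * (1 - t/6)) / (1 - t/2)^3
noncomputable def gkZt3 (t : ℝ) : ℝ :=
  (1 + t/2) * ((1 - t/4)*(1 + t/2)
    + (3/2) * Real.sqrt t * Real.sqrt (1 - t/4) * (1 - t/6)) / (1 - t/2)^3
noncomputable def gkS1 (t : ℝ) : ℝ := -t/2 + Real.sqrt t * Real.sqrt (1 + 3*t/4)
noncomputable def gkSt1 (t : ℝ) : ℝ := -t/2 - Real.sqrt t * Real.sqrt (1 + 3*t/4)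
noncomputable def gkS2 (t : ℝ) : ℝ := -t + Real.sqrt t * Real.sqrt (1 + t)
noncomputable def gkSt2 (t : ℝ) : ℝ := -t - Real.sqrt t * Real.sqrt (1 + t)
noncomputable def gkS3 (t : ℝ) : ℝ :=
  (-(3/2)*t*(1 - t/6) + Real.sqrt t * Real.sqrt (1 - t/4) * (1 + t/2)) / (1 - t/2)
noncomputable def gkSt3 (t : ℝ) : ℝ :=
  (-(3/2)*t*(1 - t/6) - Real.sqrt t * Real.sqrt (1 - t/4) * (1 + t/2)) / (1 - t/2)
noncomputable def gkV2 (t : ℝ) : ℝ := (1 + t)^2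
noncomputable def gkV3 (t : ℝ) : ℝ := (1 + t/2)^3 / (1 - t/2)
noncomputable def gkW1 (t : ℝ) : ℝ := (1 + t/2)⁻¹
noncomputable def gkW2 (t : ℝ) : ℝ := (Real.sqrt (1 + t))⁻¹
noncomputable def gkW3 (t : ℝ) : ℝ := 2 / (2 + t)
noncomputable def gkX1 (t : ℝ) : ℝ :=
  (1 + t/2) ^ (-(3:ℝ)/4) * (1 + 3*t/4) ^ (-(1:ℝ)/2)
noncomputable def gkX2 (t : ℝ) : ℝ := (1 + t) ^ (-(3:ℝ)/2)
noncomputable def gkX3 (t : ℝ) : ℝ :=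
  (1 - t/2) ^ ((3:ℝ)/4) * (1 - t/4) ^ (-(1:ℝ)/2) * (1 + t/2) ^ (-(4:ℝ))

/-! Each `S̃_s` differs from `S_s` only in the sign of its `√t`-term, so
`s·R_s + 2S_s + S_{1,s} = s·R_s + (S_s + S̃_s)` no longer involves any square root, and the
constraint reduces to an identity of rational functions of `t`. -/

theorem gkS1_add_gkSt1 (t : ℝ) : gkS1 t + gkSt1 t = -t := by
  unfold gkS1 gkSt1
  ring

theorem gkS2_add_gkSt2 (t : ℝ) : gkS2 t + gkSt2 t = -(2 * t) := by
  unfold gkS2 gkSt2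
  ring

theorem gkS3_add_gkSt3 {t : ℝ} (ht : t ≠ 2) :
    gkS3 t + gkSt3 t = -(3 * (t * (6 - t) / (3 * (2 - t)))) := by
  have h2 : (2 : ℝ) - t ≠ 0 := sub_ne_zero.mpr ht.symm
  have h1 : (1 : ℝ) - t / 2 ≠ 0 := by
    rw [show (1 : ℝ) - t / 2 = (2 - t) / 2 by ring]
    exact div_ne_zero h2 two_ne_zero
  unfold gkS3 gkSt3
  field_simp
  ring

theorem stmt_12_general (t : ℝ) (ht2 : t < 2) :
    1*t + 2*gkS1 t + (gkSt1 t - gkS1 t) = 0 ∧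
    2*t + 2*gkS2 t + (gkSt2 t - gkS2 t) = 0 ∧
    3*(t*(6 - t)/(3*(2 - t))) + 2*gkS3 t + (gkSt3 t - gkS3 t) = 0 := by
  refine ⟨?_, ?_, ?_⟩
  · linarith [gkS1_add_gkSt1 t]
  · linarith [gkS2_add_gkSt2 t]
  · linarith [gkS3_add_gkSt3 ht2.ne]

/-- for `0 < t < 2`, with `S_{1,s} = S̃_s − S_s`, the
constraint `s·R_s + 2S_s + S_{1,s} = 0` holds for `s = 1, 2, 3`, where
`R₁ = R₂ = t` and `R₃(t) = t(6−t)/(3(2−t))`. -/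
theorem stmt_12 (t : ℝ) (ht0 : 0 < t) (ht2 : t < 2) :
    1*t + 2*gkS1 t + (gkSt1 t - gkS1 t) = 0 ∧
    2*t + 2*gkS2 t + (gkSt2 t - gkS2 t) = 0 ∧
    3*(t*(6 - t)/(3*(2 - t))) + 2*gkS3 t + (gkSt3 t - gkS3 t) = 0 :=
  stmt_12_general t ht2
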